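/- arXiv:math/0612498 — 2 statements merged into one kernel-verified Lean document; each statement's English description precedes it below -/
import Mathlib

section
/- Let C be a finite category with consolidation monoid C^cd and let c be an object of C. For any x ∈ C_c = C(c,c), the H-class of x in C^cd coincides with the H-class of x in the monoid C_c. -/
/-- A finite category presented by its set of arrows with a partial composition. -/
structure FinCat (Obj : Type) where
  Arr : Type
  src : Arr → Obj
  tgt : Arr → Obj
  id : Obj → Arr
  comp : (f g : Arr) → tgt f = src g → Arr
  src_id : ∀ a, src (id a) = a
  tgt_id : ∀ a, tgt (id a) = a
  src_comp : ∀ f g h, src (comp f g h) = src f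
  tgt_comp : ∀ f g h, tgt (comp f g h) = tgt g
  id_comp : ∀ (f : Arr) (h : tgt (id (src f)) = src f), comp (id (src f)) f h = f
  comp_id : ∀ (f : Arr) (h : tgt f = src (id (tgt f))), comp f (id (tgt f)) h = f
  assoc : ∀ (f g k : Arr) (h1 : tgt f = src g) (h2 : tgt g = src k) h3 h4,
    comp (comp f g h1) k h3 = comp f (comp g k h2) h4

/-- The underlying set of the consolidation monoid `C^cd`:
arrows of `C` together with an adjoined zero and identity. -/
inductive Cd {Obj : Type} (C : FinCat Obj) where
  | zero : Cd C
  | one : Cd C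
  | arr : C.Arr → Cd C

variable {Obj : Type} [DecidableEq Obj]

/-- Multiplication of the consolidation: composition where defined, `0` otherwise,
with `1` an adjoined identity and `0` absorbing. -/
def cdMul (C : FinCat Obj) : Cd C → Cd C → Cd C
  | .one, x => x
  | .zero, _ => .zero
  | x, .one => x
  | _, .zero => .zero
  | .arr f, .arr g => if h : C.tgt f = C.src g then .arr (C.comp f g h) else .zero

theorem cdMul_zero (C : FinCat Obj) (x : Cd C) : cdMul C x Cd.zero = Cd.zero := by
  cases x <;> rfl
theorem cdZero_mul (C : FinCat Obj) (x : Cd C) : cdMul C Cd.zero x = Cd.zero := by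
  cases x <;> rfl
theorem cdMul_one (C : FinCat Obj) (x : Cd C) : cdMul C x Cd.one = x := by
  cases x <;> rfl
theorem cdOne_mul (C : FinCat Obj) (x : Cd C) : cdMul C Cd.one x = x := by
  cases x <;> rfl

theorem cdMul_assoc (C : FinCat Obj) (x y z : Cd C) :
    cdMul C (cdMul C x y) z = cdMul C x (cdMul C y z) := by
  cases x <;> cases y <;> cases z <;>
    (try simp only [cdMul_zero, cdZero_mul, cdMul_one, cdOne_mul]) <;> (try rfl)
  case arr.arr.arr f g k =>
    by_cases h1 : C.tgt f = C.src g
    · by_cases h2 : C.tgt g = C.src k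
      · show cdMul C (dite _ _ _) _ = cdMul C _ (dite _ _ _)
        rw [dif_pos h1, dif_pos h2]
        show dite _ _ _ = dite _ _ _
        rw [dif_pos (show C.tgt (C.comp f g h1) = C.src k by rw [C.tgt_comp]; exact h2),
            dif_pos (show C.tgt f = C.src (C.comp g k h2) by rw [C.src_comp]; exact h1)]
        exact congrArg Cd.arr (C.assoc f g k h1 h2 _ _)
      · show cdMul C (dite _ _ _) _ = cdMul C _ (dite _ _ _)
        rw [dif_pos h1, dif_neg h2]
        show dite _ _ _ = Cd.zero
        rw [dif_neg (show ¬ C.tgt (C.comp f g h1) = C.src k by rw [C.tgt_comp]; exact h2)]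
    · show cdMul C (dite _ _ _) _ = cdMul C _ (cdMul C _ _)
      rw [dif_neg h1]
      by_cases h2 : C.tgt g = C.src k
      · show Cd.zero = cdMul C _ (dite _ _ _)
        rw [dif_pos h2]
        show Cd.zero = dite _ _ _
        rw [dif_neg (show ¬ C.tgt f = C.src (C.comp g k h2) by rw [C.src_comp]; exact h1)]
      · show Cd.zero = cdMul C _ (dite _ _ _)
        rw [dif_neg h2, cdMul_zero]

instance cdMonoid (C : FinCat Obj) : Monoid (Cd C) where
  mul := cdMul C
  one := .one
  one_mul x := by cases x <;> rfl
  mul_one x := by cases x <;> rfl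
  mul_assoc := cdMul_assoc C

/-- Green's R-equivalence in a monoid. -/
def RE {M : Type} [Monoid M] (s t : M) : Prop := (∃ a, s * a = t) ∧ (∃ a, t * a = s)
/-- Green's L-equivalence in a monoid. -/
def LE' {M : Type} [Monoid M] (s t : M) : Prop := (∃ a, a * s = t) ∧ (∃ a, a * t = s)
/-- Green's H-equivalence in a monoid. -/
def HE {M : Type} [Monoid M] (s t : M) : Prop := RE s t ∧ LE' s t
/-- Green's J-equivalence in a monoid. -/
def JE {M : Type} [Monoid M] (s t : M) : Prop :=
  (∃ a b, a * s * b = t) ∧ (∃ a b, a * t * b = s)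

/-- Green's R-equivalence relative to a subset `S` (multipliers taken in `S`). -/
def REOn {M : Type} [Monoid M] (S : Set M) (s t : M) : Prop :=
  (∃ a ∈ S, s * a = t) ∧ (∃ a ∈ S, t * a = s)
def LEOn {M : Type} [Monoid M] (S : Set M) (s t : M) : Prop :=
  (∃ a ∈ S, a * s = t) ∧ (∃ a ∈ S, a * t = s)
def HEOn {M : Type} [Monoid M] (S : Set M) (s t : M) : Prop := REOn S s t ∧ LEOn S s t
def JEOn {M : Type} [Monoid M] (S : Set M) (s t : M) : Prop :=
  (∃ a ∈ S, ∃ b ∈ S, a * s * b = t) ∧ (∃ a ∈ S, ∃ b ∈ S, a * t * b = s)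

/-- The local monoid `C_c = C(c,c)`, viewed as a subset of the consolidation. -/
def locSet (C : FinCat Obj) (c : Obj) : Set (Cd C) :=
  {x | ∃ f : C.Arr, x = Cd.arr f ∧ C.src f = c ∧ C.tgt f = c}

theorem cd_mul_def (C : FinCat Obj) (x y : Cd C) : x * y = cdMul C x y := rfl

theorem cdMul_arr_arr (C : FinCat Obj) (f g : C.Arr) :
    cdMul C (Cd.arr f) (Cd.arr g) =
      if h : C.tgt f = C.src g then Cd.arr (C.comp f g h) else Cd.zero := rfl

theorem id_mem_locSet (C : FinCat Obj) (c : Obj) : Cd.arr (C.id c) ∈ locSet C c :=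
  ⟨C.id c, rfl, C.src_id c, C.tgt_id c⟩

theorem arr_mul_id (C : FinCat Obj) (c : Obj) (g : C.Arr) (h : C.tgt g = c) :
    cdMul C (Cd.arr g) (Cd.arr (C.id c)) = Cd.arr g := by
  subst h
  rw [cdMul_arr_arr, dif_pos (C.src_id (C.tgt g)).symm]
  exact congrArg Cd.arr (C.comp_id g _)

theorem id_mul_arr (C : FinCat Obj) (c : Obj) (g : C.Arr) (h : C.src g = c) :
    cdMul C (Cd.arr (C.id c)) (Cd.arr g) = Cd.arr g := by
  subst h
  rw [cdMul_arr_arr, dif_pos (C.tgt_id (C.src g))]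
  exact congrArg Cd.arr (C.id_comp g _)

/-- If `arr f * b = arr g` then `src g = src f`, and the multiplier can be chosen
in `locSet C c` when `f, g ∈ C(c,c)`. -/
theorem right_mul_analysis (C : FinCat Obj) (c : Obj) (f g : C.Arr)
    (hfs : C.src f = c) (hft : C.tgt f = c) (hgt : C.tgt g = c)
    (b : Cd C) (hb : cdMul C (Cd.arr f) b = Cd.arr g) :
    C.src g = c ∧ ∃ b' ∈ locSet C c, cdMul C (Cd.arr f) b' = Cd.arr g := by
  cases b with
  | zero => rw [cdMul_zero] at hb; exact absurd hb (by simp)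
  | one =>
    rw [cdMul_one] at hb
    cases hb
    exact ⟨hfs, Cd.arr (C.id c), id_mem_locSet C c, arr_mul_id C c f hft⟩
  | arr h =>
    rw [cdMul_arr_arr] at hb
    by_cases hc : C.tgt f = C.src h
    · rw [dif_pos hc] at hb
      obtain rfl : C.comp f h hc = g := by injection hb
      refine ⟨by rw [C.src_comp]; exact hfs, Cd.arr h, ⟨h, rfl, ?_, ?_⟩,
        by rw [cdMul_arr_arr, dif_pos hc]⟩
      · rw [← hc]; exact hft
      · rw [← C.tgt_comp f h hc]; exact hgt
    · rw [dif_neg hc] at hb; exact absurd hb (by simp)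

theorem left_mul_analysis (C : FinCat Obj) (c : Obj) (f g : C.Arr)
    (hfs : C.src f = c) (hft : C.tgt f = c) (hgs : C.src g = c)
    (b : Cd C) (hb : cdMul C b (Cd.arr f) = Cd.arr g) :
    C.tgt g = c ∧ ∃ b' ∈ locSet C c, cdMul C b' (Cd.arr f) = Cd.arr g := by
  cases b with
  | zero => rw [cdZero_mul] at hb; exact absurd hb (by simp)
  | one =>
    rw [cdOne_mul] at hb
    cases hb
    exact ⟨hft, Cd.arr (C.id c), id_mem_locSet C c, id_mul_arr C c f hfs⟩
  | arr h =>
    rw [cdMul_arr_arr] at hb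
    by_cases hc : C.tgt h = C.src f
    · rw [dif_pos hc] at hb
      obtain rfl : C.comp h f hc = g := by injection hb
      refine ⟨by rw [C.tgt_comp]; exact hft, Cd.arr h, ⟨h, rfl, ?_, ?_⟩,
        by rw [cdMul_arr_arr, dif_pos hc]⟩
      · rw [← C.src_comp h f hc]; exact hgs
      · rw [hc]; exact hfs
    · rw [dif_neg hc] at hb; exact absurd hb (by simp)


theorem right_mul_src (C : FinCat Obj) (c : Obj) (f g : C.Arr) (hfs : C.src f = c)
    (b : Cd C) (hb : cdMul C (Cd.arr f) b = Cd.arr g) : C.src g = c := by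
  cases b with
  | zero => rw [cdMul_zero] at hb; exact absurd hb (by simp)
  | one => rw [cdMul_one] at hb; cases hb; exact hfs
  | arr h =>
    rw [cdMul_arr_arr] at hb
    by_cases hc : C.tgt f = C.src h
    · rw [dif_pos hc] at hb
      obtain rfl : C.comp f h hc = g := by injection hb
      rw [C.src_comp]; exact hfs
    · rw [dif_neg hc] at hb; exact absurd hb (by simp)

theorem left_mul_tgt (C : FinCat Obj) (c : Obj) (f g : C.Arr) (hft : C.tgt f = c)
    (b : Cd C) (hb : cdMul C b (Cd.arr f) = Cd.arr g) : C.tgt g = c := by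
  cases b with
  | zero => rw [cdZero_mul] at hb; exact absurd hb (by simp)
  | one => rw [cdOne_mul] at hb; cases hb; exact hft
  | arr h =>
    rw [cdMul_arr_arr] at hb
    by_cases hc : C.tgt h = C.src f
    · rw [dif_pos hc] at hb
      obtain rfl : C.comp h f hc = g := by injection hb
      rw [C.tgt_comp]; exact hft
    · rw [dif_neg hc] at hb; exact absurd hb (by simp)

/-- for `x ∈ C_c`, the H-class of `x` in `C^cd` coincides with the
H-class of `x` in the monoid `C_c`. -/
theorem stmt_7 (C : FinCat Obj) [Fintype Obj] [Fintype C.Arr] (c : Obj)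
    (x : Cd C) (hx : x ∈ locSet C c) :
    {z : Cd C | HE z x} = {z ∈ locSet C c | HEOn (locSet C c) z x} := by
  obtain ⟨f, rfl, hfs, hft⟩ := hx
  ext z
  simp only [Set.mem_setOf_eq, Set.mem_sep_iff]
  constructor
  · rintro ⟨⟨⟨a, ha⟩, ⟨b, hb⟩⟩, ⟨⟨p, hp⟩, ⟨q, hq⟩⟩⟩
    rw [cd_mul_def] at ha hb hp hq
    -- first show z is an arrow
    cases z with
    | zero => rw [cdZero_mul] at ha; exact absurd ha (by simp)
    | one =>
      -- x * b = 1 is impossible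
      exfalso
      cases b with
      | zero => rw [cdMul_zero] at hb; exact absurd hb (by simp)
      | one => rw [cdMul_one] at hb; exact absurd hb (by simp)
      | arr h =>
        rw [cdMul_arr_arr] at hb
        by_cases hc : C.tgt f = C.src h
        · rw [dif_pos hc] at hb; exact absurd hb (by simp)
        · rw [dif_neg hc] at hb; exact absurd hb (by simp)
    | arr g =>
      have hgt : C.tgt g = c := left_mul_tgt C c f g hft q hq
      have hgs : C.src g = c := right_mul_src C c f g hfs b hb
      have hzmem : Cd.arr g ∈ locSet C c := ⟨g, rfl, hgs, hgt⟩
      obtain ⟨_, b', hb'mem, hb'⟩ := right_mul_analysis C c f g hfs hft hgt b hb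
      obtain ⟨_, a', ha'mem, ha'⟩ := right_mul_analysis C c g f hgs hgt hft a ha
      obtain ⟨_, q', hq'mem, hq'⟩ := left_mul_analysis C c f g hfs hft hgs q hq
      obtain ⟨_, p', hp'mem, hp'⟩ := left_mul_analysis C c g f hgs hgt hfs p hp
      exact ⟨hzmem, ⟨⟨a', ha'mem, ha'⟩, ⟨b', hb'mem, hb'⟩⟩,
        ⟨⟨p', hp'mem, hp'⟩, ⟨q', hq'mem, hq'⟩⟩⟩
  · rintro ⟨_, ⟨⟨a, _, ha⟩, ⟨b, _, hb⟩⟩, ⟨⟨p, _, hp⟩, ⟨q, _, hq⟩⟩⟩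
    exact ⟨⟨⟨a, ha⟩, ⟨b, hb⟩⟩, ⟨⟨p, hp⟩, ⟨q, hq⟩⟩⟩
end

section
/- Let C be a finite category, c an object, s, t ∈ C_c = C(c,c), and J a regular J-class of the consolidation C^cd with J ∩ C_c = ∅ and J ∉ {{0},{1}}. Then for all idempotents x, y ∈ J, one has xsy = 0 = xty in C^cd. Consequently s and t are identified by the generalized-group-mapping congruence associated to J. -/
variable {Obj : Type} [DecidableEq Obj]

/-- The J-preorder in a monoid: `s ≥_J t` iff `t ∈ M s M`. -/
def mJge {M : Type} [Monoid M] (s t : M) : Prop := ∃ a b : M, a * s * b = t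

/-- `F(J)`: the set of elements that are not J-above `J`. -/
def FJ {M : Type} [Monoid M] (J : Set M) : Set M := {u : M | ∀ z ∈ J, ¬ mJge u z}


/-!
An idempotent of `C^cd` other than `0, 1` is an endomorphism `e` of some object `d`, and
`e s ≠ 0` forces `d = c`, i.e. `e ∈ C_c`; hence `x s = 0` for idempotents `x ∈ J`.

For the congruence, `x s y ∈ F(J)` for all `x, y ∈ J`: if `x s y` were `J`-above `J`, then
`x J x s y`, and stability of the finite monoid `C^cd` gives `x = x s y b`. The element
`s y b` is a nonzero arrow leaving `c` with `x · s y b = x`, so it is an endomorphism of `c`;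
it also lies `J`-between `x` and `y`, so it would be an element of `J ∩ C_c`.
-/

section GreenPreorder

variable {M : Type} [Monoid M]

theorem mJge.trans {a b c : M} (hab : mJge a b) (hbc : mJge b c) : mJge a c := by
  obtain ⟨p, q, rfl⟩ := hab
  obtain ⟨r, u, rfl⟩ := hbc
  exact ⟨r * p, q * u, by simp only [mul_assoc]⟩

theorem JE.symm {s t : M} (h : JE s t) : JE t s := ⟨h.2, h.1⟩

theorem JE.trans {s t u : M} (hst : JE s t) (htu : JE t u) : JE s u :=
  ⟨mJge.trans hst.1 htu.1, mJge.trans htu.2 hst.2⟩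

theorem exists_mul_pow_eq_self_of_mul_mul_eq [Finite M] {u x v : M} (h : u * x * v = x) :
    ∃ n, 0 < n ∧ x * v ^ n = x := by
  have hpow : ∀ n : ℕ, u ^ n * x * v ^ n = x := by
    intro n
    induction n with
    | zero => simp
    | succ n ih =>
      calc u ^ (n + 1) * x * v ^ (n + 1) = u ^ n * (u * x * v) * v ^ n := by
            rw [pow_succ u, pow_succ' v]
            simp only [mul_assoc]
        _ = x := by rw [h, ih]
  have key : ∀ i j : ℕ, i < j → v ^ i = v ^ j → ∃ n, 0 < n ∧ x * v ^ n = x := by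
    intro i j hij hv
    refine ⟨j - i, Nat.sub_pos_of_lt hij, ?_⟩
    calc x * v ^ (j - i) = u ^ i * x * (v ^ i * v ^ (j - i)) := by
          rw [← mul_assoc, hpow]
      _ = x := by rw [← pow_add, Nat.add_sub_cancel' hij.le, ← hv, hpow]
  obtain ⟨i, j, hne, hv⟩ := Finite.exists_ne_map_eq_of_infinite (fun n : ℕ => v ^ n)
  rcases hne.lt_or_gt with hij | hji
  · exact key i j hij hv
  · exact key j i hji hv.symm

/-- `R`-stability of a finite monoid: `x J x a` implies `x R x a`. -/
theorem exists_mul_mul_eq_self_of_mJge [Finite M] {x a : M} (h : mJge (x * a) x) :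
    ∃ b, x * a * b = x := by
  obtain ⟨u, v, huv⟩ := h
  have huv' : u * x * (a * v) = x := by simpa only [mul_assoc] using huv
  obtain ⟨n, hn, hx⟩ := exists_mul_pow_eq_self_of_mul_mul_eq huv'
  obtain ⟨k, rfl⟩ := Nat.exists_eq_add_of_lt hn
  exact ⟨v * (a * v) ^ k, by simpa only [zero_add, pow_succ', mul_assoc] using hx⟩

end GreenPreorder

namespace Cd

variable {C : FinCat Obj}

instance [Finite C.Arr] : Finite (Cd C) :=
  Finite.of_surjective (fun o : Option (Option C.Arr) => o.elim Cd.zero (·.elim Cd.one Cd.arr))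
    fun
      | Cd.zero => ⟨none, rfl⟩
      | Cd.one => ⟨some none, rfl⟩
      | Cd.arr f => ⟨some (some f), rfl⟩

theorem zero_mul' (x : Cd C) : Cd.zero * x = Cd.zero := cdZero_mul C x

theorem mul_zero' (x : Cd C) : x * Cd.zero = Cd.zero := cdMul_zero C x

theorem arr_mul_arr_of_eq {f g : C.Arr} (h : C.tgt f = C.src g) :
    Cd.arr f * Cd.arr g = Cd.arr (C.comp f g h) :=
  dif_pos h

theorem arr_mul_arr_of_ne {f g : C.Arr} (h : C.tgt f ≠ C.src g) :
    Cd.arr f * Cd.arr g = Cd.zero :=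
  dif_neg h

theorem arr_mul_eq_zero_or (f : C.Arr) (w : Cd C) :
    Cd.arr f * w = Cd.zero ∨ ∃ g, Cd.arr f * w = Cd.arr g ∧ C.src g = C.src f := by
  cases w with
  | zero => exact Or.inl (mul_zero' _)
  | one => exact Or.inr ⟨f, mul_one _, rfl⟩
  | arr g =>
    by_cases h : C.tgt f = C.src g
    · exact Or.inr ⟨_, arr_mul_arr_of_eq h, C.src_comp f g h⟩
    · exact Or.inl (arr_mul_arr_of_ne h)

theorem tgt_eq_src_of_arr_mul_arr_eq_self {e g : C.Arr} (h : Cd.arr e * Cd.arr g = Cd.arr e) :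
    C.tgt e = C.src g ∧ C.tgt g = C.src g := by
  by_cases heg : C.tgt e = C.src g
  · rw [arr_mul_arr_of_eq heg, Cd.arr.injEq] at h
    exact ⟨heg, by rw [← heg, ← h, C.tgt_comp]⟩
  · rw [arr_mul_arr_of_ne heg] at h
    cases h

theorem mem_locSet_of_mul_self {c : Obj} {x s : Cd C} (hxx : x * x = x) (hx1 : x ≠ Cd.one)
    (hs : s ∈ locSet C c) (hxs : x * s ≠ Cd.zero) : x ∈ locSet C c := by
  obtain ⟨f, rfl, hfs, -⟩ := hs
  cases x with
  | zero => exact absurd (zero_mul' _) hxs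
  | one => exact absurd rfl hx1
  | arr e =>
    have hef : C.tgt e = C.src f := by_contra fun h => hxs (arr_mul_arr_of_ne h)
    obtain ⟨hee, -⟩ := tgt_eq_src_of_arr_mul_arr_eq_self hxx
    exact ⟨e, rfl, by rw [← hee, hef, hfs], by rw [hef, hfs]⟩

theorem mul_mem_locSet_of_mul_mul_eq_self {c : Obj} {x s w : Cd C} (hx0 : x ≠ Cd.zero)
    (hs : s ∈ locSet C c) (hx : x * (s * w) = x) : s * w ∈ locSet C c := by
  obtain ⟨f, rfl, hfs, -⟩ := hs
  rcases arr_mul_eq_zero_or f w with hsw | ⟨g, hsw, hgf⟩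
  · rw [hsw, mul_zero'] at hx
    exact absurd hx.symm hx0
  rw [hsw] at hx ⊢
  cases x with
  | zero => exact absurd rfl hx0
  | one => cases hx
  | arr e =>
    obtain ⟨-, hg⟩ := tgt_eq_src_of_arr_mul_arr_eq_self hx
    exact ⟨g, rfl, hgf.trans hfs, by rw [hg, hgf, hfs]⟩

end Cd

theorem mul_mul_mem_FJ {C : FinCat Obj} [Finite C.Arr] {c : Obj} {s w x y : Cd C}
    (hs : s ∈ locSet C c) (hdisj : {z | JE z w} ∩ locSet C c = ∅)
    (hx : JE x w) (hy : JE y w) (hx0 : x ≠ Cd.zero) : x * s * y ∈ FJ {z | JE z w} := by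
  rintro z hz ⟨a, b, hz_eq⟩
  have hxsy : mJge (x * (s * y)) x :=
    mJge.trans ⟨a, b, by simpa only [mul_assoc] using hz_eq⟩ (hx.trans hz.symm).2
  obtain ⟨b', hb'⟩ := exists_mul_mul_eq_self_of_mJge hxsy
  have hself : x * (s * (y * b')) = x := by simpa only [mul_assoc] using hb'
  have hloc : s * (y * b') ∈ locSet C c := Cd.mul_mem_locSet_of_mul_mul_eq_self hx0 hs hself
  have hJ : JE (s * (y * b')) x :=
    ⟨⟨x, 1, by rw [mul_one, hself]⟩,
      mJge.trans (hx.trans hy.symm).1 ⟨s, b', by simp only [mul_assoc]⟩⟩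
  exact Set.eq_empty_iff_forall_notMem.mp hdisj _ ⟨hJ.trans hx, hloc⟩

theorem stmt_17_general (C : FinCat Obj) [Fintype C.Arr] (c : Obj)
    (s t : Cd C) (hs : s ∈ locSet C c) (ht : t ∈ locSet C c)
    (J : Set (Cd C)) (hJ : ∃ w : Cd C, J = {z | JE z w})
    (hdisj : J ∩ locSet C c = ∅)
    (h1 : Cd.one ∉ J) :
    (∀ x ∈ J, ∀ y ∈ J, x * x = x → y * y = y →
      x * s * y = Cd.zero ∧ x * t * y = Cd.zero) ∧
    (∀ (Q : Type) [Semigroup Q] (θ : Cd C → Q) (z0 : Q),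
      (∀ a b : Cd C, a ∈ FJ J ∪ J → b ∈ FJ J ∪ J → θ (a * b) = θ a * θ b) →
      (∀ u ∈ FJ J, θ u = z0) →
      (∀ q : Q, z0 * q = z0 ∧ q * z0 = z0) →
      ∀ x ∈ J, ∀ y ∈ J, θ (x * s * y) = θ (x * t * y)) := by
  have idem_mul_eq_zero {r x : Cd C} (hr : r ∈ locSet C c) (hx : x ∈ J) (hxx : x * x = x) :
      x * r = Cd.zero := by_contra fun hxr =>
    Set.eq_empty_iff_forall_notMem.mp hdisj x
      ⟨hx, Cd.mem_locSet_of_mul_self hxx (ne_of_mem_of_not_mem hx h1) hr hxr⟩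
  obtain ⟨w, rfl⟩ := hJ
  refine ⟨fun x hx y _ hxx _ => ⟨?_, ?_⟩, fun Q _ θ z0 _ hF _ x hx y hy => ?_⟩
  · rw [idem_mul_eq_zero hs hx hxx, Cd.zero_mul']
  · rw [idem_mul_eq_zero ht hx hxx, Cd.zero_mul']
  · rcases eq_or_ne x Cd.zero with rfl | hx0
    · simp only [Cd.zero_mul']
    · rw [hF _ (mul_mul_mem_FJ hs hdisj hx hy hx0), hF _ (mul_mul_mem_FJ ht hdisj hx hy hx0)]

/-- if `s, t ∈ C_c` and `J` is a regular J-class of `C^cd` with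
`J ∩ C_c = ∅` and `J ∉ {{0},{1}}`, then `xsy = 0 = xty` for all idempotents
`x, y ∈ J`; consequently `s` and `t` are identified by the GGM congruence at `J`
(images under any homomorphism factoring through the Rees quotient agree for all
`x, y ∈ J`). -/
theorem stmt_17 (C : FinCat Obj) [Fintype Obj] [Fintype C.Arr] (c : Obj)
    (s t : Cd C) (hs : s ∈ locSet C c) (ht : t ∈ locSet C c)
    (J : Set (Cd C)) (hJ : ∃ w : Cd C, J = {z | JE z w})
    (hreg : ∃ z ∈ J, ∃ z' : Cd C, z * z' * z = z)
    (hdisj : J ∩ locSet C c = ∅)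
    (h0 : Cd.zero ∉ J) (h1 : Cd.one ∉ J) :
    (∀ x ∈ J, ∀ y ∈ J, x * x = x → y * y = y →
      x * s * y = Cd.zero ∧ x * t * y = Cd.zero) ∧
    (∀ (Q : Type) [Semigroup Q] (θ : Cd C → Q) (z0 : Q),
      (∀ a b : Cd C, a ∈ FJ J ∪ J → b ∈ FJ J ∪ J → θ (a * b) = θ a * θ b) →
      (∀ u ∈ FJ J, θ u = z0) →
      (∀ q : Q, z0 * q = z0 ∧ q * z0 = z0) →
      ∀ x ∈ J, ∀ y ∈ J, θ (x * s * y) = θ (x * t * y)) :=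
  stmt_17_general C c s t hs ht J hJ hdisj h1
end
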